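/- arXiv:1108.1473 — 2 statements merged into one kernel-verified Lean document; each statement's English description precedes it below -/
import Mathlib

section
/- For any finite lattice L (meet-closed), the maximal number of rows of the complemented structure matrix A^c of L that are independent over the superboolean semiring equals the height of L (the length of a maximal strict chain in L). -/
open scoped Classical

/-- The superboolean semiring `SB = {0, 1, 1^ν}`. -/
def SB := Fin 3

instance : DecidableEq SB := inferInstanceAs (DecidableEq (Fin 3))
instance : Fintype SB := inferInstanceAs (Fintype (Fin 3))

def SB.zero : SB := (0 : Fin 3)
def SB.one : SB := (1 : Fin 3)
/-- The ghost element `1^ν`. -/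
def SB.nu : SB := (2 : Fin 3)

def SB.val (a : SB) : ℕ := Fin.val a

instance : Zero SB := ⟨SB.zero⟩
instance : One SB := ⟨SB.one⟩

def SB.add (a b : SB) : SB := (⟨min (a.val + b.val) 2, by omega⟩ : Fin 3)
def SB.mul (a b : SB) : SB := (⟨min (a.val * b.val) 2, by omega⟩ : Fin 3)

instance : Add SB := ⟨SB.add⟩
instance : Mul SB := ⟨SB.mul⟩

instance : AddCommMonoid SB where
  add := (· + ·)
  add_assoc := by decide
  zero_add := by decide
  add_zero := by decide
  add_comm := by decide
  nsmul := nsmulRec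

instance : CommMonoid SB where
  mul := (· * ·)
  mul_assoc := by decide
  one_mul := by decide
  mul_one := by decide
  mul_comm := by decide
  npow := npowRec

/-- The permanent of a square superboolean matrix. -/
def sbPer {n : ℕ} (A : Matrix (Fin n) (Fin n) SB) : SB :=
  ∑ π : Equiv.Perm (Fin n), ∏ i, A (π i) i

/-- A square superboolean matrix is nonsingular when its permanent is `1`. -/
def Nonsingular {n : ℕ} (A : Matrix (Fin n) (Fin n) SB) : Prop := sbPer A = SB.one

/-- Membership in the ghost ideal `{0, 1^ν}`. -/
def SB.IsGhost (a : SB) : Prop := a = SB.zero ∨ a = SB.nu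

/-- A family of superboolean vectors is dependent if some nontrivial boolean
combination of them lies entirely in the ghost ideal. -/
def SBDep {κ ι : Type*} [Fintype κ] (v : κ → ι → SB) : Prop :=
  ∃ α : κ → SB, (∀ k, α k = SB.zero ∨ α k = SB.one) ∧ (∃ k, α k ≠ SB.zero) ∧
    ∀ j : ι, SB.IsGhost (∑ k, α k * v k j)

/-- Independence of a family of superboolean vectors. -/
def SBIndep {κ ι : Type*} [Fintype κ] (v : κ → ι → SB) : Prop := ¬ SBDep v

/-- A matrix is boolean if none of its entries is the ghost `1^ν`. -/
def IsBooleanMat {ι κ : Type*} (A : Matrix ι κ SB) : Prop := ∀ i j, A i j ≠ SB.nu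
/-- The complemented structure matrix of a finite (pre)ordered set `L`:
entry `(x, y)` is `1` iff `x ≰ y`, and `0` iff `x ≤ y`. -/
noncomputable def Ac (L : Type*) [Preorder L] : Matrix L L SB :=
  fun x y => if x ≤ y then SB.zero else SB.one

/-!
Independence of a family of superboolean vectors amounts to: every nonempty subfamily has a
coordinate where exactly one of its members is `1` and all others are `0`. For the rows of `Ac`
indexed by `w`, this says that every nonempty set of row indices contains an `i` and a column
`y` with `w i ≰ y` but `w j ≤ y` for the other `j`.

Rows indexed by the non-bottom elements of a chain satisfy this, with `i` the top of the set and
`y` the element of the chain just below `w i`. Conversely, given independent rows all below `t`,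
the chosen `y` yields `y ⊓ t < t` lying above all the other rows, so induction on the number of
rows produces a chain of that length ending at `⊤`.
-/

namespace SB

theorem add_eq_zero_iff : ∀ a b : SB, a + b = SB.zero ↔ a = SB.zero ∧ b = SB.zero := by
  decide

theorem add_eq_one_iff : ∀ a b : SB,
    a + b = SB.one ↔ a = SB.zero ∧ b = SB.one ∨ a = SB.one ∧ b = SB.zero := by
  decide

theorem isGhost_iff_ne_one (a : SB) : SB.IsGhost a ↔ a ≠ SB.one := by
  unfold SB.IsGhost
  revert a
  decide

theorem indicator_mul (p : Prop) [Decidable p] (a : SB) :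
    (if p then SB.one else SB.zero) * a = if p then a else 0 := by
  split_ifs
  · exact one_mul a
  · revert a
    decide

theorem sum_eq_zero_iff {ι : Type*} {s : Finset ι} {f : ι → SB} :
    ∑ i ∈ s, f i = SB.zero ↔ ∀ i ∈ s, f i = SB.zero := by
  induction s using Finset.cons_induction with
  | empty => exact iff_of_true rfl (by simp)
  | cons a s ha ih => rw [Finset.sum_cons, add_eq_zero_iff, ih, Finset.forall_mem_cons]

theorem sum_eq_one_iff {ι : Type*} {s : Finset ι} {f : ι → SB} :
    ∑ i ∈ s, f i = SB.one ↔
      ∃ i ∈ s, f i = SB.one ∧ ∀ j ∈ s, j ≠ i → f j = SB.zero := by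
  refine ⟨fun h => ?_, fun ⟨i, hi, hfi, hzero⟩ =>
    (Finset.sum_eq_single_of_mem i hi hzero).trans hfi⟩
  induction s using Finset.cons_induction with
  | empty => exact absurd (Finset.sum_empty.symm.trans h) (by decide)
  | cons a s ha ih =>
    rw [Finset.sum_cons, add_eq_one_iff] at h
    rcases h with ⟨hfa, hs⟩ | ⟨hfa, hs⟩
    · obtain ⟨i, hi, hfi, hzero⟩ := ih hs
      exact ⟨i, Finset.mem_cons_of_mem hi, hfi,
        (Finset.forall_mem_cons ha _).2 ⟨fun _ => hfa, hzero⟩⟩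
    · exact ⟨a, Finset.mem_cons_self a s, hfa, (Finset.forall_mem_cons ha _).2
        ⟨fun hne => (hne rfl).elim, fun j hj _ => sum_eq_zero_iff.1 hs j hj⟩⟩

end SB

theorem sbDep_iff {κ ι : Type*} [Fintype κ] (v : κ → ι → SB) :
    SBDep v ↔ ∃ S : Finset κ, S.Nonempty ∧ ∀ j, SB.IsGhost (∑ k ∈ S, v k j) := by
  constructor
  · rintro ⟨α, hbool, ⟨k₀, hk₀⟩, hghost⟩
    have hmul (k : κ) (a : SB) : α k * a = if α k = SB.one then a else 0 := by
      rcases hbool k with h | h <;> rw [h]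
      · exact (SB.indicator_mul False a).trans (if_neg (by decide))
      · exact (one_mul a).trans (if_pos rfl).symm
    refine ⟨Finset.univ.filter (α · = SB.one),
      ⟨k₀, by simpa using (hbool k₀).resolve_left hk₀⟩, fun j => ?_⟩
    simpa only [Finset.sum_filter, hmul] using hghost j
  · rintro ⟨S, ⟨k₀, hk₀⟩, hghost⟩
    refine ⟨fun k => if k ∈ S then SB.one else SB.zero,
      fun k => by dsimp only; split_ifs <;> simp,
      ⟨k₀, by simpa [hk₀] using (by decide : SB.one ≠ SB.zero)⟩, fun j => ?_⟩
    simpa only [SB.indicator_mul, Finset.sum_ite_mem, Finset.univ_inter] using hghost j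

theorem sbIndep_iff {κ ι : Type*} [Fintype κ] (v : κ → ι → SB) :
    SBIndep v ↔ ∀ S : Finset κ, S.Nonempty → ∃ j, ∑ k ∈ S, v k j = SB.one := by
  simp only [SBIndep, sbDep_iff, SB.isGhost_iff_ne_one, not_exists, not_and, not_forall,
    not_not]

theorem Fin.strictMono_snoc {α : Type*} [Preorder α] {n : ℕ} {c : Fin (n + 1) → α} {t : α}
    (hc : StrictMono c) (ht : c (Fin.last n) < t) :
    StrictMono (Fin.snoc c t : Fin (n + 2) → α) := by
  refine Fin.strictMono_iff_lt_succ.2 fun i => ?_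
  induction i using Fin.lastCases with
  | last => simpa only [Fin.snoc_castSucc, Fin.succ_last, Fin.snoc_last] using ht
  | cast j =>
    simpa only [Fin.snoc_castSucc, Fin.succ_castSucc] using hc j.castSucc_lt_succ

section Ac

variable {L : Type*}

theorem Ac_eq_one_iff [Preorder L] {x y : L} : Ac L x y = SB.one ↔ ¬ x ≤ y := by
  unfold Ac
  split_ifs with h
  · exact iff_of_false (by decide) (not_not_intro h)
  · exact iff_of_true rfl h

theorem Ac_eq_zero_iff [Preorder L] {x y : L} : Ac L x y = SB.zero ↔ x ≤ y := by
  unfold Ac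
  split_ifs with h
  · exact iff_of_true rfl h
  · exact iff_of_false (by decide) h

theorem sbIndep_Ac_rows_iff [Preorder L] {κ : Type*} [Fintype κ] (w : κ → L) :
    SBIndep (fun i y => Ac L (w i) y) ↔
      ∀ S : Finset κ, S.Nonempty →
        ∃ y, ∃ i ∈ S, ¬ w i ≤ y ∧ ∀ j ∈ S, j ≠ i → w j ≤ y := by
  simp only [sbIndep_iff, SB.sum_eq_one_iff, Ac_eq_one_iff, Ac_eq_zero_iff]

theorem sbIndep_Ac_succ_of_strictMono [Preorder L] {n : ℕ} {c : Fin (n + 1) → L}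
    (hc : StrictMono c) : SBIndep (fun (i : Fin n) y => Ac L (c i.succ) y) := by
  refine (sbIndep_Ac_rows_iff _).2 fun S hS => ⟨c (S.max' hS).castSucc, S.max' hS, S.max'_mem hS,
    (hc (S.max' hS).castSucc_lt_succ).not_ge, fun j hj hne => hc.monotone ?_⟩
  exact Fin.succ_le_castSucc_iff.2 ((S.le_max' j hj).lt_of_ne hne)

theorem exists_strictMono_of_sbIndep_Ac [SemilatticeInf L] {κ : Type*} [Fintype κ] {w : κ → L}
    (hw : SBIndep (fun i y => Ac L (w i) y)) {n : ℕ} {S : Finset κ} (hS : S.card = n) {t : L}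
    (ht : ∀ i ∈ S, w i ≤ t) :
    ∃ c : Fin (n + 1) → L, StrictMono c ∧ c (Fin.last n) = t := by
  induction n generalizing S t with
  | zero => exact ⟨fun _ => t, Fin.strictMono_iff_lt_succ.2 (·.elim0), rfl⟩
  | succ n ih =>
    obtain ⟨y, i, hi, hiy, hy⟩ :=
      (sbIndep_Ac_rows_iff w).1 hw S (Finset.card_pos.1 (hS ▸ n.succ_pos))
    have hlt : y ⊓ t < t :=
      inf_le_right.lt_of_ne fun he => hiy ((ht i hi).trans (he ▸ inf_le_left))
    obtain ⟨c, hc, hlast⟩ := ih (S := S.erase i) (t := y ⊓ t)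
      (by rw [Finset.card_erase_of_mem hi, hS, Nat.add_sub_cancel])
      (fun j hj => le_inf (hy j (Finset.mem_of_mem_erase hj) (Finset.ne_of_mem_erase hj))
        (ht j (Finset.mem_of_mem_erase hj)))
    exact ⟨Fin.snoc c t, Fin.strictMono_snoc hc (hlast ▸ hlt), Fin.snoc_last _ _⟩

end Ac

/-- For a finite lattice, the maximal number of independent rows of the complemented
structure matrix equals the height of the lattice. -/
theorem nook_eq_height {L : Type*} [Fintype L] [Lattice L] [BoundedOrder L] :
    ∃ h : ℕ,
      IsGreatest {n : ℕ | ∃ c : Fin (n + 1) → L, StrictMono c} h ∧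
      IsGreatest {k : ℕ | ∃ w : Fin k → L, Function.Injective w ∧
        SBIndep (fun i (y : L) => Ac L (w i) y)} h := by
  have hbdd : BddAbove {n : ℕ | ∃ c : Fin (n + 1) → L, StrictMono c} :=
    ⟨Fintype.card L, fun n ⟨c, hc⟩ => by
      have := Fintype.card_le_of_injective c hc.injective
      rw [Fintype.card_fin] at this
      omega⟩
  obtain ⟨h, hh⟩ := hbdd.exists_isGreatest_of_nonempty
    ⟨0, fun _ => ⊥, Fin.strictMono_iff_lt_succ.2 (·.elim0)⟩
  refine ⟨h, hh, ?_, ?_⟩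
  · obtain ⟨c, hc⟩ := hh.1
    exact ⟨_, hc.injective.comp (Fin.succ_injective _), sbIndep_Ac_succ_of_strictMono hc⟩
  · rintro k ⟨w, -, hw⟩
    obtain ⟨c, hc, -⟩ :=
      exists_strictMono_of_sbIndep_Ac hw (Finset.card_fin k) (fun i _ => le_top (a := w i))
    exact hh.2 ⟨c, hc⟩
end

section
/- If a hereditary collection H = (E, H) has a boolean representation, then H satisfies the point replacement property: for every singleton {p} ∈ H and every nonempty J ∈ H, there exists x ∈ J such that (J \ {x}) ∪ {p} ∈ H. -/
open scoped Classical

/-- A hereditary collection: a nonempty collection of subsets closed under taking subsets. -/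
structure HerCol (E : Type*) [Fintype E] where
  Indep : Set E → Prop
  exists_indep : ∃ X, Indep X
  indep_subset : ∀ ⦃X Y : Set E⦄, X ⊆ Y → Indep Y → Indep X

section Aux
open Finset

lemma SB.val_le_two (a : SB) : a.val ≤ 2 := by revert a; decide
lemma SB.val_add (a b : SB) : (a + b).val = min (a.val + b.val) 2 := rfl
lemma SB.val_mul (a b : SB) : (a * b).val = min (a.val * b.val) 2 := rfl
lemma SB.eq_one_of_val {a : SB} (h : a.val = 1) : a = SB.one := by revert a; decide
lemma SB.eq_zero_of_val {a : SB} (h : a.val = 0) : a = SB.zero := by revert a; decide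
lemma SB.bool_val_le {a : SB} (h : a ≠ SB.nu) : a.val ≤ 1 := by revert a; decide
lemma SB.not_ghost_iff {a : SB} : ¬ a.IsGhost ↔ a.val = 1 := by
  revert a; intro a; unfold SB.IsGhost; revert a; decide
lemma SB.one_mul' (a : SB) : SB.one * a = a := by revert a; decide
lemma SB.zero_mul' (a : SB) : SB.zero * a = SB.zero := by revert a; decide
lemma SB.one_ne_zero' : SB.one ≠ SB.zero := by decide

lemma SB.val_sum {ι : Type*} (s : Finset ι) (v : ι → SB) :
    (∑ y ∈ s, v y).val = min (∑ y ∈ s, (v y).val) 2 := by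
  classical
  induction s using Finset.induction_on with
  | empty => simp; decide
  | @insert a s ha ih =>
    rw [Finset.sum_insert ha, Finset.sum_insert ha, SB.val_add, ih]
    have := SB.val_le_two (v a)
    omega

end Aux

section Main
open Finset

variable {E : Type*} [Fintype E] {m : ℕ}

/-- Dependence phrased via a nonempty sub-Finset whose column sum is ghost in every row. -/
def FDep (A : Matrix (Fin m) E SB) (s : Finset E) : Prop :=
  ∃ t ⊆ s, t.Nonempty ∧ ∀ j : Fin m, SB.IsGhost (∑ y ∈ t, A j y)

lemma sum_indicator (A : Matrix (Fin m) E SB) (s t : Finset E) (hts : t ⊆ s) (j : Fin m) :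
    (∑ k : {y // y ∈ s}, (if (k : E) ∈ t then SB.one else SB.zero) * A j k)
      = ∑ y ∈ t, A j y := by
  classical
  have h1 : (∑ k : {y // y ∈ s}, (if (k : E) ∈ t then SB.one else SB.zero) * A j k)
      = ∑ y ∈ s, (if y ∈ t then SB.one else SB.zero) * A j y :=
    Finset.sum_coe_sort s (fun y => (if y ∈ t then SB.one else SB.zero) * A j y)
  rw [h1]
  have h2 : ∀ y ∈ s, (if y ∈ t then SB.one else SB.zero) * A j y
      = (if y ∈ t then A j y else 0) := by
    intro y _
    by_cases hy : y ∈ t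
    · simp [hy, SB.one_mul']
    · simp [hy, SB.zero_mul']
      rfl
  rw [Finset.sum_congr rfl h2, Finset.sum_ite_mem, Finset.inter_eq_right.2 hts]

lemma dep_iff (A : Matrix (Fin m) E SB) (s : Finset E) :
    SBDep (fun (a : {y // y ∈ s}) (i : Fin m) => A i a) ↔ FDep A s := by
  classical
  constructor
  · rintro ⟨α, hb, ⟨k0, hk0⟩, hg⟩
    refine ⟨s.filter (fun y => ∃ h : y ∈ s, α ⟨y, h⟩ = SB.one), Finset.filter_subset _ _, ?_, ?_⟩
    · refine ⟨k0, Finset.mem_filter.2 ⟨k0.2, k0.2, ?_⟩⟩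
      rcases hb k0 with h | h
      · exact absurd h hk0
      · rw [show (⟨(k0 : E), k0.2⟩ : {y // y ∈ s}) = k0 from Subtype.ext rfl]; exact h
    · intro j
      have hα : α = fun (k : {y // y ∈ s}) => if (k : E) ∈ s.filter (fun y => ∃ h : y ∈ s, α ⟨y, h⟩ = SB.one)
          then SB.one else SB.zero := by
        funext k
        by_cases hk : α k = SB.one
        · rw [if_pos]; · exact hk
          exact Finset.mem_filter.2 ⟨k.2, k.2, by rwa [show (⟨(k : E), k.2⟩ : {y // y ∈ s}) = k from Subtype.ext rfl]⟩
        · rw [if_neg]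
          · exact (hb k).resolve_right hk
          · intro hmem
            rcases Finset.mem_filter.1 hmem with ⟨_, h, hone⟩
            exact hk (by rwa [show (⟨(k : E), h⟩ : {y // y ∈ s}) = k from Subtype.ext rfl] at hone)
      rw [← sum_indicator A s _ (Finset.filter_subset _ _) j]
      have hgj := hg j
      rw [hα] at hgj
      exact hgj
  · rintro ⟨t, hts, ⟨y0, hy0⟩, hg⟩
    refine ⟨fun k => if (k : E) ∈ t then SB.one else SB.zero, fun k => ?_, ⟨⟨y0, hts hy0⟩, ?_⟩, ?_⟩
    · by_cases hk : (k : E) ∈ t <;> simp [hk]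
    · simp only [hy0, if_pos]
      exact SB.one_ne_zero'
    · intro j
      rw [sum_indicator A s t hts j]
      exact hg j

lemma FDep.mono {A : Matrix (Fin m) E SB} {s s' : Finset E} (h : s ⊆ s') (hd : FDep A s) :
    FDep A s' := by
  obtain ⟨t, hts, h1, h2⟩ := hd
  exact ⟨t, hts.trans h, h1, h2⟩

end Main

section Main2
open Finset

variable {E : Type*} [Fintype E] {m : ℕ}

set_option linter.unusedSectionVars false

lemma exists_unique_one {A : Matrix (Fin m) E SB} (hbool : IsBooleanMat A)
    (s : Finset E) (hs : s.Nonempty) (hind : ¬ FDep A s) :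
    ∃ r : Fin m, ∃ x ∈ s, A r x = SB.one ∧ ∀ y ∈ s, y ≠ x → A r y = SB.zero := by
  classical
  have h1 : ¬ ∀ j : Fin m, SB.IsGhost (∑ y ∈ s, A j y) := by
    intro h
    exact hind ⟨s, le_refl s, hs, h⟩
  push_neg at h1
  obtain ⟨r, hr⟩ := h1
  have hval : (∑ y ∈ s, A r y).val = 1 := SB.not_ghost_iff.1 hr
  rw [SB.val_sum] at hval
  have hsum : (∑ y ∈ s, (A r y).val) = 1 := by omega
  have hle : ∀ y ∈ s, (A r y).val ≤ 1 := fun y _ => SB.bool_val_le (hbool r y)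
  have hx : ∃ x ∈ s, (A r x).val = 1 := by
    by_contra h
    push_neg at h
    have : (∑ y ∈ s, (A r y).val) = 0 :=
      Finset.sum_eq_zero (fun y hy => by have := h y hy; have := hle y hy; omega)
    omega
  obtain ⟨x, hxs, hx1⟩ := hx
  refine ⟨r, x, hxs, SB.eq_one_of_val hx1, fun y hy hyx => ?_⟩
  have herase : (∑ z ∈ s.erase x, (A r z).val) = 0 := by
    have h : (∑ z ∈ s.erase x, (A r z).val) + (A r x).val = ∑ z ∈ s, (A r z).val :=
      Finset.sum_erase_add s _ hxs
    omega
  have := (Finset.sum_eq_zero_iff).1 herase y (Finset.mem_erase.2 ⟨hyx, hy⟩)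
  exact SB.eq_zero_of_val this

lemma fdep_extend {A : Matrix (Fin m) E SB} (s : Finset E) (x : E) (hx : x ∉ s)
    (r : Fin m) (hrx : A r x = SB.one) (hrs : ∀ y ∈ s, A r y = SB.zero)
    (hind : ¬ FDep A s) : ¬ FDep A (insert x s) := by
  classical
  rintro ⟨t, hts, htne, hg⟩
  by_cases hxt : x ∈ t
  · have hg' := hg r
    have h0 : (∑ z ∈ t.erase x, A r z) = 0 := by
      apply Finset.sum_eq_zero
      intro z hz
      have hz' := Finset.mem_erase.1 hz
      have : z ∈ s := (Finset.mem_insert.1 (hts hz'.2)).resolve_left hz'.1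
      exact hrs z this
    have : (∑ y ∈ t, A r y) = SB.one := by
      rw [← Finset.add_sum_erase t (fun y => A r y) hxt, hrx, h0]
      decide
    rw [this] at hg'
    exact absurd hg' (SB.not_ghost_iff.2 rfl)
  · refine hind ⟨t, fun y hy => ?_, htne, hg⟩
    exact (Finset.mem_insert.1 (hts hy)).resolve_left (by rintro rfl; exact hxt hy)

end Main2

section Main3
open Finset

variable {E : Type*} [Fintype E] {m : ℕ}

set_option linter.unusedSectionVars false

lemma point_replace {A : Matrix (Fin m) E SB} (hbool : IsBooleanMat A)
    (p : E) (hp : ¬ FDep A {p}) :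
    ∀ n (J : Finset E), J.card ≤ n → J.Nonempty → ¬ FDep A J →
      ∃ x ∈ J, ¬ FDep A (insert p (J.erase x)) := by
  intro n
  induction n with
  | zero =>
    intro J hc hne _
    rw [Nat.le_zero, Finset.card_eq_zero] at hc
    exact absurd hc hne.ne_empty
  | succ n ih =>
    intro J hc hne hind
    by_cases hpJ : p ∈ J
    · exact ⟨p, hpJ, by rwa [Finset.insert_erase hpJ]⟩
    obtain ⟨r, x, hxJ, hrx, hrz⟩ := exists_unique_one hbool J hne hind
    have hindE : ¬ FDep A (J.erase x) := fun h => hind (h.mono (Finset.erase_subset _ _))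
    by_cases hp1 : A r p = SB.one
    · refine ⟨x, hxJ, ?_⟩
      have hpe : p ∉ J.erase x := fun h => hpJ (Finset.mem_of_mem_erase h)
      exact fdep_extend _ p hpe r hp1
        (fun y hy => hrz y (Finset.mem_of_mem_erase hy) (Finset.ne_of_mem_erase hy)) hindE
    · have hp0 : A r p = SB.zero := by
        have h1 := SB.bool_val_le (hbool r p)
        rcases Nat.le_one_iff_eq_zero_or_eq_one.1 h1 with h | h
        · exact SB.eq_zero_of_val h
        · exact absurd (SB.eq_one_of_val h) hp1
      by_cases hJe : (J.erase x).Nonempty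
      · obtain ⟨x', hx'e, hx'ind⟩ := ih (J.erase x)
          (by have := Finset.card_erase_of_mem hxJ; omega) hJe hindE
        refine ⟨x', Finset.mem_of_mem_erase hx'e, ?_⟩
        have hxx' : x ≠ x' := (Finset.ne_of_mem_erase hx'e).symm
        have hxmem : x ∈ J.erase x' := Finset.mem_erase.2 ⟨hxx', hxJ⟩
        have hset : insert p (J.erase x') = insert x (insert p ((J.erase x).erase x')) := by
          rw [Finset.erase_right_comm, Finset.insert_comm, Finset.insert_erase hxmem]
        rw [hset]
        apply fdep_extend
        · intro h
          rcases Finset.mem_insert.1 h with h | h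
          · exact hpJ (h ▸ hxJ)
          · have h' : x ∈ (J.erase x').erase x := Finset.erase_right_comm (a := x) (b := x') ▸ h
            exact Finset.notMem_erase x (J.erase x') h'
        · exact hrx
        · intro y hy
          rcases Finset.mem_insert.1 hy with h | h
          · exact h ▸ hp0
          · exact hrz y (Finset.mem_of_mem_erase (Finset.mem_of_mem_erase h))
              (Finset.ne_of_mem_erase (Finset.mem_of_mem_erase h))
        · exact hx'ind
      · refine ⟨x, hxJ, ?_⟩
        have hemp : J.erase x = ∅ := Finset.not_nonempty_iff_eq_empty.1 hJe
        rw [hemp]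
        simpa using hp

end Main3

/-- A hereditary collection with a boolean representation satisfies the point
replacement property. -/
theorem boolean_rep_implies_PR {E : Type*} [Fintype E] (H : HerCol E)
    (m : ℕ) (A : Matrix (Fin m) E SB) (hbool : IsBooleanMat A)
    (hrep : ∀ X : Finset E,
      H.Indep ↑X ↔ SBIndep (fun (a : {y // y ∈ X}) (i : Fin m) => A i a)) :
    ∀ p : E, H.Indep {p} → ∀ J : Set E, H.Indep J → J.Nonempty →
      ∃ x ∈ J, H.Indep (insert p (J \ {x})) := by
  classical
  intro p hp J hJ hne
  have key : ∀ s : Finset E, H.Indep ↑s ↔ ¬ FDep A s := by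
    intro s
    rw [hrep s, SBIndep, dep_iff]
  have hp' : ¬ FDep A {p} := (key {p}).1 (by simpa using hp)
  have hJf : ¬ FDep A J.toFinset := (key J.toFinset).1 (by rwa [Set.coe_toFinset])
  have hne' : J.toFinset.Nonempty := Set.toFinset_nonempty.2 hne
  obtain ⟨x, hx, hres⟩ :=
    point_replace hbool p hp' J.toFinset.card J.toFinset le_rfl hne' hJf
  refine ⟨x, Set.mem_toFinset.1 hx, ?_⟩
  have hI : H.Indep ↑(insert p (J.toFinset.erase x)) := (key _).2 hres
  have hset : (↑(insert p (J.toFinset.erase x)) : Set E) = insert p (J \ {x}) := by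
    simp [Finset.coe_insert, Finset.coe_erase, Set.coe_toFinset]
  rwa [hset] at hI
end
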